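/- arXiv:2107.04437 — 7 statements merged into one kernel-verified Lean document; each statement's English description precedes it below -/
import Mathlib

section
/- Let 0 < σ < n/2 and λ > 0. Define G(λ; ξ, z) = |ξ − z|^{2σ−n} − (λ/|ξ|)^{n−2σ}·|ξ^λ − z|^{2σ−n}, where ξ^λ = λ²ξ/|ξ|². Then G(λ; ξ, z) > 0 for all ξ, z with |ξ| > λ, |z| > λ and ξ ≠ z. -/
/-!
Writing `ξ^λ = (λ² / |ξ|²) ξ` for the Kelvin inversion, expanding both squared norms gives the
identity `|ξ|² |ξ^λ - z|² - λ² |ξ - z|² = (|ξ|² - λ²)(|z|² - λ²)`, which is positive outside the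
ball of radius `λ`. Hence `λ |ξ - z| < |ξ| |ξ^λ - z|`, and raising this to the negative power
`2σ - n` gives `G(λ; ξ, z) > 0`.
-/

open Real

section Kelvin

variable {E : Type*} [NormedAddCommGroup E] [InnerProductSpace ℝ E]

noncomputable def kelvin (lam : ℝ) (ξ : E) : E := (lam ^ 2 / ‖ξ‖ ^ 2) • ξ

theorem norm_mul_norm_kelvin_sub_sq {lam : ℝ} {ξ : E} (hξ : ξ ≠ 0) (z : E) :
    (‖ξ‖ * ‖kelvin lam ξ - z‖) ^ 2 - (lam * ‖ξ - z‖) ^ 2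
      = (‖ξ‖ ^ 2 - lam ^ 2) * (‖z‖ ^ 2 - lam ^ 2) := by
  have hξ' : ‖ξ‖ ≠ 0 := norm_ne_zero_iff.mpr hξ
  rw [mul_pow, mul_pow, kelvin, norm_sub_sq_real, norm_sub_sq_real, norm_smul,
    real_inner_smul_left, Real.norm_eq_abs, abs_of_nonneg (by positivity)]
  field_simp
  ring

theorem mul_norm_sub_lt_norm_mul_norm_kelvin_sub {lam : ℝ} {ξ z : E} (hlam : 0 < lam)
    (hξ : lam < ‖ξ‖) (hz : lam < ‖z‖) : lam * ‖ξ - z‖ < ‖ξ‖ * ‖kelvin lam ξ - z‖ := by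
  have hξ0 : ξ ≠ 0 := norm_pos_iff.mp (hlam.trans hξ)
  have hsq := norm_mul_norm_kelvin_sub_sq (lam := lam) hξ0 z
  have hpos : 0 < (‖ξ‖ ^ 2 - lam ^ 2) * (‖z‖ ^ 2 - lam ^ 2) :=
    mul_pos (by nlinarith) (by nlinarith)
  exact lt_of_pow_lt_pow_left₀ 2 (by positivity) (by linarith)

end Kelvin

theorem Real.div_rpow_mul_rpow_neg_lt_rpow_neg {p a b c d : ℝ} (hp : 0 < p) (ha : 0 < a)
    (hc : 0 < c) (hd : 0 < d) (h : c * a < d * b) : (c / d) ^ p * b ^ (-p) < a ^ (-p) := by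
  have hb : 0 < b := pos_of_mul_pos_right ((mul_pos hc ha).trans h) hd.le
  rw [rpow_neg hb.le, rpow_neg ha.le, ← inv_rpow ha.le, ← inv_rpow hb.le,
    ← mul_rpow (by positivity) (by positivity)]
  refine rpow_lt_rpow (by positivity) ?_ hp
  rw [← div_eq_mul_inv, div_div, ← one_div, div_lt_div_iff₀ (by positivity) ha]
  linarith

theorem stmt_3_general (n : ℕ) (σ lam : ℝ) (hn : 2 * σ < n) (hlam : 0 < lam)
    (ξ z : EuclideanSpace ℝ (Fin n)) (hξ : lam < ‖ξ‖) (hz : lam < ‖z‖) (hne : ξ ≠ z) :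
    0 < ‖ξ - z‖ ^ (2 * σ - (n : ℝ))
        - (lam / ‖ξ‖) ^ ((n : ℝ) - 2 * σ) * ‖(lam ^ 2 / ‖ξ‖ ^ 2) • ξ - z‖ ^ (2 * σ - (n : ℝ)) := by
  have hkey : lam * ‖ξ - z‖ < ‖ξ‖ * ‖kelvin lam ξ - z‖ :=
    mul_norm_sub_lt_norm_mul_norm_kelvin_sub hlam hξ hz
  rw [sub_pos, ← neg_sub (n : ℝ)]
  exact div_rpow_mul_rpow_neg_lt_rpow_neg (sub_pos.mpr hn) (norm_pos_iff.mpr (sub_ne_zero.mpr hne)) hlam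
    (hlam.trans hξ) hkey

theorem stmt_3 (n : ℕ) (σ lam : ℝ) (hσ : 0 < σ) (hn : 2 * σ < n) (hlam : 0 < lam)
    (ξ z : EuclideanSpace ℝ (Fin n)) (hξ : lam < ‖ξ‖) (hz : lam < ‖z‖) (hne : ξ ≠ z) :
    0 < ‖ξ - z‖ ^ (2 * σ - (n : ℝ))
        - (lam / ‖ξ‖) ^ ((n : ℝ) - 2 * σ) * ‖(lam ^ 2 / ‖ξ‖ ^ 2) • ξ - z‖ ^ (2 * σ - (n : ℝ)) :=
  stmt_3_general n σ lam hn hlam ξ z hξ hz hne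
end

section
/- Let 0 < σ < n/2 and λ > 0. If |ξ| > λ, |z| > λ and |ξ − z| < (|ξ| − λ)/3, then |ξ^λ − z| ≥ 2|ξ − z|, and consequently G(λ; ξ, z) ≥ (1 − 2^{2σ−n})·|ξ − z|^{2σ−n}, where G(λ; ξ, z) = |ξ − z|^{2σ−n} − (λ/|ξ|)^{n−2σ}·|ξ^λ − z|^{2σ−n}. -/
theorem stmt_5 (n : ℕ) (σ lam : ℝ) (hσ : 0 < σ) (hn : 2 * σ < n) (hlam : 0 < lam)
    (ξ z : EuclideanSpace ℝ (Fin n)) (hξ : lam < ‖ξ‖) (hz : lam < ‖z‖) (hne : ξ ≠ z)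
    (hclose : ‖ξ - z‖ < (‖ξ‖ - lam) / 3) :
    2 * ‖ξ - z‖ ≤ ‖(lam ^ 2 / ‖ξ‖ ^ 2) • ξ - z‖ ∧
    (1 - (2 : ℝ) ^ (2 * σ - (n : ℝ))) * ‖ξ - z‖ ^ (2 * σ - (n : ℝ))
      ≤ ‖ξ - z‖ ^ (2 * σ - (n : ℝ))
        - (lam / ‖ξ‖) ^ ((n : ℝ) - 2 * σ) * ‖(lam ^ 2 / ‖ξ‖ ^ 2) • ξ - z‖ ^ (2 * σ - (n : ℝ)) := by
  have hξ0 : 0 < ‖ξ‖ := lt_trans hlam hξ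
  have hr : 0 < ‖ξ - z‖ := by
    rw [norm_pos_iff]; exact sub_ne_zero_of_ne hne
  set c : ℝ := lam ^ 2 / ‖ξ‖ ^ 2 with hc
  have hc1 : c < 1 := by
    rw [hc, div_lt_one (by positivity)]
    nlinarith
  have hnorm : ‖c • ξ - ξ‖ = (1 - c) * ‖ξ‖ := by
    have : c • ξ - ξ = (c - 1) • ξ := by
      rw [sub_smul, one_smul]
    rw [this, norm_smul, Real.norm_eq_abs, abs_of_neg (by linarith)]
    ring
  have hkey : ‖ξ‖ - lam < ‖c • ξ - ξ‖ := by
    rw [hnorm]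
    have : (1 - c) * ‖ξ‖ = ‖ξ‖ - lam ^ 2 / ‖ξ‖ := by
      rw [hc]; field_simp
    rw [this]
    have : lam ^ 2 / ‖ξ‖ < lam := by
      rw [div_lt_iff₀ hξ0, pow_two]
      exact mul_lt_mul_of_pos_left hξ (by positivity)
    linarith
  have h1 : 2 * ‖ξ - z‖ ≤ ‖c • ξ - z‖ := by
    have htri : ‖c • ξ - ξ‖ - ‖ξ - z‖ ≤ ‖c • ξ - z‖ := by
      have := norm_sub_norm_le (c • ξ - ξ) (z - ξ)
      have heq : c • ξ - ξ - (z - ξ) = c • ξ - z := by abel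
      rw [heq, norm_sub_rev z ξ] at this
      linarith
    linarith
  refine ⟨h1, ?_⟩
  have hA : 0 < ‖c • ξ - z‖ := lt_of_lt_of_le (by linarith) h1
  set e : ℝ := 2 * σ - (n : ℝ) with he
  have he0 : e < 0 := by
    rw [he]; linarith
  -- (lam/‖ξ‖)^(n-2σ) ≤ 1
  have hb1 : (lam / ‖ξ‖) ^ ((n : ℝ) - 2 * σ) ≤ 1 := by
    apply Real.rpow_le_one (by positivity) _ (by linarith)
    rw [div_le_one hξ0]; linarith
  -- ‖c•ξ-z‖^e ≤ (2‖ξ-z‖)^e = 2^e * ‖ξ-z‖^e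
  have h2 : ‖c • ξ - z‖ ^ e ≤ (2 : ℝ) ^ e * ‖ξ - z‖ ^ e := by
    have := Real.rpow_le_rpow_of_nonpos (by linarith : (0:ℝ) < 2 * ‖ξ - z‖) h1 he0.le
    rwa [Real.mul_rpow (by norm_num) hr.le] at this
  have hApos : 0 < ‖c • ξ - z‖ ^ e := Real.rpow_pos_of_pos hA e
  have h3 : (lam / ‖ξ‖) ^ ((n : ℝ) - 2 * σ) * ‖c • ξ - z‖ ^ e ≤ (2 : ℝ) ^ e * ‖ξ - z‖ ^ e := by
    calc (lam / ‖ξ‖) ^ ((n : ℝ) - 2 * σ) * ‖c • ξ - z‖ ^ e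
        ≤ 1 * ‖c • ξ - z‖ ^ e := by
          apply mul_le_mul_of_nonneg_right hb1 hApos.le
      _ = ‖c • ξ - z‖ ^ e := one_mul _
      _ ≤ (2 : ℝ) ^ e * ‖ξ - z‖ ^ e := h2
  nlinarith [Real.rpow_pos_of_pos hr e]
end

section
/- Let 0 < σ < n/2, λ > 0, and suppose λ < |ξ| ≤ 10λ and |z| > λ with ξ ≠ z. Then there is a constant C = C(n, σ) > 0 such that G(λ; ξ, z) ≤ C·(|ξ| − λ)(|z|² − λ²) / (λ·|ξ − z|^{n−2σ+2}), where G(λ; ξ, z) = |ξ − z|^{2σ−n} − (λ/|ξ|)^{n−2σ}·|ξ^λ − z|^{2σ−n}. -/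
/-!
Write `d = ‖ξ - z‖` and `A = ‖(λ / ‖ξ‖) ξ - (‖ξ‖ / λ) z‖`. Since `ξ^λ - z = (λ / ‖ξ‖) • (…)`, the
second term of `G` is exactly `A ^ (2σ - n)`, and `A² = d² + (‖ξ‖² - λ²)(‖z‖² - λ²) / λ² ≥ d²`.
The tangent line of the convex function `t ↦ t ^ (-(n - 2σ)/2)` at `t = d²` then bounds `G` by
`(n - 2σ)/2 · (A² - d²) / d ^ (n - 2σ + 2)`, and `‖ξ‖ + λ ≤ 11 λ` gives `‖ξ‖² - λ² ≤ 11 λ (‖ξ‖ - λ)`.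
-/

open Real

lemma sub_rpow_add_one_le {u s : ℝ} (hu : 0 ≤ u) (hs : 0 ≤ s) :
    u - u ^ (s + 1) ≤ s * (1 - u) := by
  have h := one_add_mul_self_le_rpow_one_add (s := u - 1) (by linarith) (p := s + 1) (by linarith)
  rw [add_sub_cancel] at h
  linarith

lemma rpow_neg_sub_rpow_neg_le {x y s : ℝ} (hx : 0 < x) (hxy : x ≤ y) (hs : 0 ≤ s) :
    x ^ (-s) - y ^ (-s) ≤ s * x ^ (-s - 1) * (y - x) := by
  have hy : 0 < y := hx.trans_le hxy
  have hx' : x / y * (x ^ (-s - 1) * y) = x ^ (-s) := by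
    have : x ^ (-s) = x ^ (-s - 1) * x := by rw [← rpow_add_one hx.ne']; ring_nf
    rw [this]
    field_simp
  have hy' : (x / y) ^ (s + 1) * (x ^ (-s - 1) * y) = y ^ (-s) := by
    rw [div_rpow hx.le hy.le, show -s - 1 = -(s + 1) by ring, rpow_neg hx.le,
      show y ^ (-s) = y / y ^ (s + 1) by rw [rpow_add_one hy.ne', rpow_neg hy.le]; field_simp]
    field_simp
  calc x ^ (-s) - y ^ (-s) = (x / y - (x / y) ^ (s + 1)) * (x ^ (-s - 1) * y) := by
        rw [← hx', ← hy']; ring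
    _ ≤ s * (1 - x / y) * (x ^ (-s - 1) * y) := by
        gcongr; exact sub_rpow_add_one_le (by positivity) hs
    _ = s * x ^ (-s - 1) * (y - x) := by field_simp

lemma rpow_neg_sub_rpow_neg_le_of_sq {d A p : ℝ} (hd : 0 < d) (hdA : d ≤ A) (hp : 0 ≤ p) :
    d ^ (-p) - A ^ (-p) ≤ p / 2 * (A ^ 2 - d ^ 2) / d ^ (p + 2) := by
  have hA : 0 < A := hd.trans_le hdA
  have key := rpow_neg_sub_rpow_neg_le (by positivity : 0 < d ^ 2) (pow_le_pow_left₀ hd.le hdA 2)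
    (by positivity : 0 ≤ p / 2)
  have hsq : ∀ {t : ℝ} (r : ℝ), 0 < t → (t ^ 2) ^ r = t ^ (2 * r) := fun r ht => by
    rw [← rpow_natCast, ← rpow_mul ht.le]; norm_num
  rw [hsq _ hd, hsq _ hA, hsq _ hd, show 2 * (-(p / 2) - 1) = -(p + 2) by ring,
    rpow_neg hd.le] at key
  convert key using 1 <;> ring_nf

variable {E : Type*} [NormedAddCommGroup E] [InnerProductSpace ℝ E]

lemma norm_div_smul_sub_div_smul_sq {lam : ℝ} (hlam : lam ≠ 0) {ξ : E} (hξ : ξ ≠ 0) (z : E) :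
    ‖(lam / ‖ξ‖) • ξ - (‖ξ‖ / lam) • z‖ ^ 2
      = ‖ξ - z‖ ^ 2 + (‖ξ‖ ^ 2 - lam ^ 2) * (‖z‖ ^ 2 - lam ^ 2) / lam ^ 2 := by
  have : ‖ξ‖ ≠ 0 := norm_ne_zero_iff.2 hξ
  rw [norm_sub_sq_real, norm_sub_sq_real, norm_smul, norm_smul, real_inner_smul_left,
    real_inner_smul_right, norm_div, norm_div, Real.norm_eq_abs, Real.norm_eq_abs, abs_norm]
  field_simp
  rw [sq_abs]
  ring

lemma norm_sub_le_norm_div_smul_sub_div_smul {lam : ℝ} (hlam : 0 < lam) {ξ z : E}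
    (hξ : lam ≤ ‖ξ‖) (hz : lam ≤ ‖z‖) :
    ‖ξ - z‖ ≤ ‖(lam / ‖ξ‖) • ξ - (‖ξ‖ / lam) • z‖ := by
  have hξ₀ : ξ ≠ 0 := norm_pos_iff.1 (hlam.trans_le hξ)
  rw [← pow_le_pow_iff_left₀ (norm_nonneg _) (norm_nonneg _) two_ne_zero,
    norm_div_smul_sub_div_smul_sq hlam.ne' hξ₀]
  have : 0 ≤ ‖ξ‖ ^ 2 - lam ^ 2 := by nlinarith
  have : 0 ≤ ‖z‖ ^ 2 - lam ^ 2 := by nlinarith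
  have : 0 ≤ (‖ξ‖ ^ 2 - lam ^ 2) * (‖z‖ ^ 2 - lam ^ 2) / lam ^ 2 := by positivity
  linarith

lemma norm_inversion_sub_eq {lam : ℝ} (hlam : 0 < lam) {ξ : E} (hξ : ξ ≠ 0) (z : E) :
    ‖(lam ^ 2 / ‖ξ‖ ^ 2) • ξ - z‖ = lam / ‖ξ‖ * ‖(lam / ‖ξ‖) • ξ - (‖ξ‖ / lam) • z‖ := by
  have : ‖ξ‖ ≠ 0 := norm_ne_zero_iff.2 hξ
  have hvec : (lam ^ 2 / ‖ξ‖ ^ 2) • ξ - z = (lam / ‖ξ‖) • ((lam / ‖ξ‖) • ξ - (‖ξ‖ / lam) • z) := by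
    rw [smul_sub, smul_smul, smul_smul, div_mul_div_cancel₀ this, div_self hlam.ne', one_smul]
    ring_nf
  rw [hvec, norm_smul, Real.norm_of_nonneg (by positivity)]

lemma rpow_mul_norm_inversion_sub_rpow_neg {lam : ℝ} (hlam : 0 < lam) {ξ : E} (hξ : ξ ≠ 0) (z : E)
    (p : ℝ) :
    (lam / ‖ξ‖) ^ p * ‖(lam ^ 2 / ‖ξ‖ ^ 2) • ξ - z‖ ^ (-p)
      = ‖(lam / ‖ξ‖) • ξ - (‖ξ‖ / lam) • z‖ ^ (-p) := by
  have : 0 < ‖ξ‖ := norm_pos_iff.2 hξ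
  rw [norm_inversion_sub_eq hlam hξ, mul_rpow (by positivity) (norm_nonneg _), ← mul_assoc,
    ← rpow_add (by positivity), add_neg_cancel, rpow_zero, one_mul]

theorem stmt_6_general (n : ℕ) (σ : ℝ) (hn : 2 * σ < n) :
    ∃ C : ℝ, 0 < C ∧ ∀ (lam : ℝ) (ξ z : EuclideanSpace ℝ (Fin n)),
      0 < lam → lam < ‖ξ‖ → ‖ξ‖ ≤ 10 * lam → lam < ‖z‖ → ξ ≠ z →
      ‖ξ - z‖ ^ (2 * σ - (n : ℝ))
          - (lam / ‖ξ‖) ^ ((n : ℝ) - 2 * σ) * ‖(lam ^ 2 / ‖ξ‖ ^ 2) • ξ - z‖ ^ (2 * σ - (n : ℝ))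
        ≤ C * ((‖ξ‖ - lam) * (‖z‖ ^ 2 - lam ^ 2)) / (lam * ‖ξ - z‖ ^ ((n : ℝ) - 2 * σ + 2)) := by
  have hp : 0 < (n : ℝ) - 2 * σ := by linarith
  refine ⟨11 * (((n : ℝ) - 2 * σ) / 2), by positivity, ?_⟩
  intro lam ξ z hlam hlξ hξ10 hlz hne
  have hξ : ξ ≠ 0 := norm_pos_iff.1 (hlam.trans hlξ)
  have hd : 0 < ‖ξ - z‖ := norm_pos_iff.2 (sub_ne_zero.2 hne)
  have hdA := norm_sub_le_norm_div_smul_sub_div_smul hlam hlξ.le hlz.le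
  have h11 : (‖ξ‖ + lam) / lam ≤ 11 := by rw [div_le_iff₀ hlam]; linarith
  rw [← neg_sub (n : ℝ) (2 * σ), rpow_mul_norm_inversion_sub_rpow_neg hlam hξ]
  calc _ ≤ ((n : ℝ) - 2 * σ) / 2 * (‖(lam / ‖ξ‖) • ξ - (‖ξ‖ / lam) • z‖ ^ 2 - ‖ξ - z‖ ^ 2)
          / ‖ξ - z‖ ^ ((n : ℝ) - 2 * σ + 2) := rpow_neg_sub_rpow_neg_le_of_sq hd hdA hp.le
    _ = (‖ξ‖ + lam) / lam * (((n : ℝ) - 2 * σ) / 2 * ((‖ξ‖ - lam) * (‖z‖ ^ 2 - lam ^ 2))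
          / (lam * ‖ξ - z‖ ^ ((n : ℝ) - 2 * σ + 2))) := by
        rw [norm_div_smul_sub_div_smul_sq hlam.ne' hξ]; field_simp; ring
    _ ≤ _ := by
        have : 0 ≤ ‖z‖ ^ 2 - lam ^ 2 := by nlinarith
        rw [mul_assoc 11, mul_div_assoc 11]
        gcongr

theorem stmt_6 (n : ℕ) (σ : ℝ) (hσ : 0 < σ) (hn : 2 * σ < n) :
    ∃ C : ℝ, 0 < C ∧ ∀ (lam : ℝ) (ξ z : EuclideanSpace ℝ (Fin n)),
      0 < lam → lam < ‖ξ‖ → ‖ξ‖ ≤ 10 * lam → lam < ‖z‖ → ξ ≠ z →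
      ‖ξ - z‖ ^ (2 * σ - (n : ℝ))
          - (lam / ‖ξ‖) ^ ((n : ℝ) - 2 * σ) * ‖(lam ^ 2 / ‖ξ‖ ^ 2) • ξ - z‖ ^ (2 * σ - (n : ℝ))
        ≤ C * ((‖ξ‖ - lam) * (‖z‖ ^ 2 - lam ^ 2)) / (lam * ‖ξ - z‖ ^ ((n : ℝ) - 2 * σ + 2)) :=
  stmt_6_general n σ hn
end

section
/- Let 0 < σ < n/2, λ > 0, and suppose λ < |ξ| ≤ 10λ, |z| > λ, and |ξ − z| ≥ (|ξ| − λ)/3. Then there is a constant C = C(n, σ) > 0 such that G(λ; ξ, z) ≥ C·(|ξ| − λ)(|z|² − λ²) / (λ·|ξ − z|^{n−2σ+2}). -/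
/-!
Put `s = n - 2σ`, `a = |ξ - z|` and `b = |(λ/|ξ|)ξ - (|ξ|/λ)z| = (|ξ|/λ)|ξ^λ - z|`, so that
`G(λ; ξ, z) = a^{-s} - b^{-s}`. Expanding the squares gives the inversion identity
`b² - a² = (|ξ|² - λ²)(|z|² - λ²)/λ²`, and the hypotheses give `b ≤ 43 a`. Convexity of
`t ↦ t^{-s/2}` at `t = b²` then yields `a^{-s} - b^{-s} ≥ (s/2) b^{-s-2} (b² - a²)
≥ (s/2) 43^{-s-2} a^{-s-2} (b² - a²)`, which is the claim since `(|ξ|² - λ²)/λ ≥ |ξ| - λ`.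
-/

open Real

/-- The tangent-line inequality for the convex function `t ↦ t ^ (-p)`. -/
lemma Real.mul_rpow_neg_sub_one_mul_sub_le {A B p : ℝ} (hA : 0 < A) (hB : 0 < B) (hp : 0 ≤ p) :
    p * B ^ (-p - 1) * (B - A) ≤ A ^ (-p) - B ^ (-p) := by
  set r := A / B
  have hr : 0 < r := div_pos hA hB
  have bernoulli : 1 + p * (1 - r) ≤ r ^ (-p) := by
    rw [rpow_def_of_pos hr]
    nlinarith [add_one_le_exp (log r * -p), log_le_sub_one_of_pos hr]
  have hA_eq : A ^ (-p) = r ^ (-p) * B ^ (-p) := by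
    rw [← mul_rpow hr.le hB.le, div_mul_cancel₀ A hB.ne']
  have hlhs : p * B ^ (-p - 1) * (B - A) = p * (1 - r) * B ^ (-p) := by
    rw [rpow_sub hB, rpow_one]
    simp only [r]
    field_simp
  rw [hA_eq, hlhs]
  nlinarith [mul_le_mul_of_nonneg_right bernoulli (rpow_pos_of_pos hB (-p)).le]

lemma Real.rpow_neg_sub_rpow_neg_ge {a b s : ℝ} (ha : 0 < a) (hb : 0 < b) (hs : 0 ≤ s) :
    s / 2 * b ^ (-(s + 2)) * (b ^ 2 - a ^ 2) ≤ a ^ (-s) - b ^ (-s) := by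
  have hsq : ∀ {x : ℝ}, 0 < x → ∀ q : ℝ, (x ^ 2) ^ q = x ^ (2 * q) := fun {x} hx q => by
    rw [← rpow_natCast x 2, ← rpow_mul hx.le]
    norm_num
  have := mul_rpow_neg_sub_one_mul_sub_le (pow_pos ha 2) (pow_pos hb 2) (p := s / 2) (by positivity)
  rwa [hsq ha, hsq hb, hsq hb, show 2 * (-(s / 2)) = -s by ring,
    show 2 * (-(s / 2) - 1) = -(s + 2) by ring] at this

lemma Real.rpow_neg_sub_rpow_neg_ge_of_le_mul {a b s K : ℝ} (ha : 0 < a) (hK : 0 < K)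
    (hab : a ≤ b) (hbK : b ≤ K * a) (hs : 0 ≤ s) :
    s / 2 * K ^ (-(s + 2)) * (b ^ 2 - a ^ 2) / a ^ (s + 2) ≤ a ^ (-s) - b ^ (-s) := by
  have hb : 0 < b := ha.trans_le hab
  have hbK' : K ^ (-(s + 2)) * a ^ (-(s + 2)) ≤ b ^ (-(s + 2)) := by
    rw [← mul_rpow hK.le ha.le]
    exact rpow_le_rpow_of_nonpos hb hbK (by linarith)
  calc s / 2 * K ^ (-(s + 2)) * (b ^ 2 - a ^ 2) / a ^ (s + 2)
      = s / 2 * (K ^ (-(s + 2)) * a ^ (-(s + 2))) * (b ^ 2 - a ^ 2) := by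
        rw [rpow_neg ha.le]
        ring
    _ ≤ s / 2 * b ^ (-(s + 2)) * (b ^ 2 - a ^ 2) := by gcongr; nlinarith
    _ ≤ a ^ (-s) - b ^ (-s) := rpow_neg_sub_rpow_neg_ge ha hb hs

section InnerProductSpace

variable {E : Type*} [NormedAddCommGroup E] [InnerProductSpace ℝ E] {lam : ℝ} {x y : E}

lemma norm_smul_sub_smul_eq_mul_norm_inversion_sub (hlam : 0 < lam) (hx : 0 < ‖x‖) :
    ‖(lam / ‖x‖) • x - (‖x‖ / lam) • y‖ = ‖x‖ / lam * ‖(lam ^ 2 / ‖x‖ ^ 2) • x - y‖ := by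
  have : (lam / ‖x‖) • x - (‖x‖ / lam) • y = (‖x‖ / lam) • ((lam ^ 2 / ‖x‖ ^ 2) • x - y) := by
    rw [smul_sub, smul_smul]
    congr 2
    field_simp
  rw [this, norm_smul, norm_of_nonneg (by positivity)]

lemma norm_smul_sub_smul_sq_sub_norm_sub_sq (hlam : lam ≠ 0) (hx : ‖x‖ ≠ 0) :
    ‖(lam / ‖x‖) • x - (‖x‖ / lam) • y‖ ^ 2 - ‖x - y‖ ^ 2
      = (‖x‖ ^ 2 - lam ^ 2) * (‖y‖ ^ 2 - lam ^ 2) / lam ^ 2 := by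
  rw [norm_sub_sq_real, norm_sub_sq_real, real_inner_smul_left, real_inner_smul_right,
    norm_smul, norm_smul, norm_div, norm_div, norm_norm, Real.norm_eq_abs]
  field_simp
  rw [sq_abs]
  ring

lemma norm_sub_sq_add_le_norm_smul_sub_smul_sq (hlam : 0 < lam) (hx : lam ≤ ‖x‖)
    (hy : lam ≤ ‖y‖) :
    ‖x - y‖ ^ 2 + (‖x‖ - lam) * (‖y‖ ^ 2 - lam ^ 2) / lam
      ≤ ‖(lam / ‖x‖) • x - (‖x‖ / lam) • y‖ ^ 2 := by
  have hx0 : 0 < ‖x‖ := hlam.trans_le hx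
  have hx' : 0 ≤ ‖x‖ - lam := sub_nonneg.2 hx
  have hy' : 0 ≤ ‖y‖ ^ 2 - lam ^ 2 := sub_nonneg.2 (by gcongr)
  have : (‖x‖ - lam) * (‖y‖ ^ 2 - lam ^ 2) / lam
      ≤ (‖x‖ ^ 2 - lam ^ 2) * (‖y‖ ^ 2 - lam ^ 2) / lam ^ 2 := by
    rw [div_le_div_iff₀ hlam (by positivity)]
    nlinarith [mul_nonneg (mul_nonneg (mul_nonneg hx' hy') hlam.le) hx0.le]
  linarith [norm_smul_sub_smul_sq_sub_norm_sub_sq (y := y) hlam.ne' hx0.ne']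

lemma norm_smul_sub_smul_le (hlam : 0 < lam) (hx : lam ≤ ‖x‖) :
    ‖(lam / ‖x‖) • x - (‖x‖ / lam) • y‖ ≤ ‖x‖ / lam * ‖x - y‖ + (‖x‖ ^ 2 - lam ^ 2) / lam := by
  have hx0 : 0 < ‖x‖ := hlam.trans_le hx
  have hdecomp : (lam / ‖x‖) • x - (‖x‖ / lam) • y
      = (‖x‖ / lam) • (x - y) + (lam / ‖x‖ - ‖x‖ / lam) • x := by
    rw [smul_sub, sub_smul]
    abel
  have hcoef : |lam / ‖x‖ - ‖x‖ / lam| * ‖x‖ = (‖x‖ ^ 2 - lam ^ 2) / lam := by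
    rw [abs_of_nonpos (by rw [sub_nonpos, div_le_div_iff₀ hx0 hlam]; nlinarith)]
    field_simp
    ring
  calc ‖(lam / ‖x‖) • x - (‖x‖ / lam) • y‖
      ≤ ‖(‖x‖ / lam) • (x - y)‖ + ‖(lam / ‖x‖ - ‖x‖ / lam) • x‖ := hdecomp ▸ norm_add_le _ _
    _ = ‖x‖ / lam * ‖x - y‖ + (‖x‖ ^ 2 - lam ^ 2) / lam := by
      rw [norm_smul, norm_smul, Real.norm_eq_abs, Real.norm_eq_abs, abs_of_pos (by positivity),
        hcoef]

lemma norm_smul_sub_smul_le_forty_three_mul (hlam : 0 < lam) (hx : lam < ‖x‖)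
    (hx10 : ‖x‖ ≤ 10 * lam) (hxy : (‖x‖ - lam) / 3 ≤ ‖x - y‖) :
    ‖(lam / ‖x‖) • x - (‖x‖ / lam) • y‖ ≤ 43 * ‖x - y‖ := by
  have hratio : ‖x‖ / lam ≤ 10 := by rw [div_le_iff₀ hlam]; linarith
  have hgap : (‖x‖ ^ 2 - lam ^ 2) / lam ≤ 33 * ‖x - y‖ := by
    rw [div_le_iff₀ hlam]
    nlinarith
  nlinarith [norm_smul_sub_smul_le (y := y) hlam hx.le, norm_nonneg (x - y)]

end InnerProductSpace

theorem stmt_7_general (n : ℕ) (σ : ℝ) (hn : 2 * σ < n) :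
    ∃ C : ℝ, 0 < C ∧ ∀ (lam : ℝ) (ξ z : EuclideanSpace ℝ (Fin n)),
      0 < lam → lam < ‖ξ‖ → ‖ξ‖ ≤ 10 * lam → lam < ‖z‖ →
      (‖ξ‖ - lam) / 3 ≤ ‖ξ - z‖ →
      C * ((‖ξ‖ - lam) * (‖z‖ ^ 2 - lam ^ 2)) / (lam * ‖ξ - z‖ ^ ((n : ℝ) - 2 * σ + 2))
        ≤ ‖ξ - z‖ ^ (2 * σ - (n : ℝ))
          - (lam / ‖ξ‖) ^ ((n : ℝ) - 2 * σ) * ‖(lam ^ 2 / ‖ξ‖ ^ 2) • ξ - z‖ ^ (2 * σ - (n : ℝ)) := by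
  set s : ℝ := (n : ℝ) - 2 * σ
  have hs : 0 < s := by linarith
  refine ⟨s / 2 * 43 ^ (-(s + 2)), by positivity, fun lam ξ z hlam hlξ hξ10 hlz hξz => ?_⟩
  have hξ : 0 < ‖ξ‖ := hlam.trans hlξ
  have ha : 0 < ‖ξ - z‖ := lt_of_lt_of_le (by linarith) hξz
  have hsecond : (lam / ‖ξ‖) ^ s * ‖(lam ^ 2 / ‖ξ‖ ^ 2) • ξ - z‖ ^ (-s)
      = ‖(lam / ‖ξ‖) • ξ - (‖ξ‖ / lam) • z‖ ^ (-s) := by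
    rw [norm_smul_sub_smul_eq_mul_norm_inversion_sub hlam hξ, mul_rpow (by positivity)
      (norm_nonneg _), ← inv_div, inv_rpow (by positivity), ← rpow_neg (by positivity)]
  set b := ‖(lam / ‖ξ‖) • ξ - (‖ξ‖ / lam) • z‖
  have hgap := norm_sub_sq_add_le_norm_smul_sub_smul_sq (y := z) hlam hlξ.le hlz.le
  have hgap_nonneg : 0 ≤ (‖ξ‖ - lam) * (‖z‖ ^ 2 - lam ^ 2) / lam := by
    have : lam ^ 2 ≤ ‖z‖ ^ 2 := by gcongr
    have : lam ≤ ‖ξ‖ := hlξ.le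
    positivity
  have hab : ‖ξ - z‖ ≤ b := by
    rw [← pow_le_pow_iff_left₀ ha.le (norm_nonneg _) two_ne_zero]
    linarith
  rw [show 2 * σ - (n : ℝ) = -s by ring, show (n : ℝ) - 2 * σ + 2 = s + 2 from rfl, hsecond]
  calc s / 2 * 43 ^ (-(s + 2)) * ((‖ξ‖ - lam) * (‖z‖ ^ 2 - lam ^ 2)) / (lam * ‖ξ - z‖ ^ (s + 2))
      = s / 2 * 43 ^ (-(s + 2)) * ((‖ξ‖ - lam) * (‖z‖ ^ 2 - lam ^ 2) / lam)
          / ‖ξ - z‖ ^ (s + 2) := by ring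
    _ ≤ s / 2 * 43 ^ (-(s + 2)) * (b ^ 2 - ‖ξ - z‖ ^ 2) / ‖ξ - z‖ ^ (s + 2) := by gcongr; linarith
    _ ≤ ‖ξ - z‖ ^ (-s) - b ^ (-s) :=
      rpow_neg_sub_rpow_neg_ge_of_le_mul ha (by norm_num) hab
        (norm_smul_sub_smul_le_forty_three_mul hlam hlξ hξ10 hξz) hs.le

theorem stmt_7 (n : ℕ) (σ : ℝ) (hσ : 0 < σ) (hn : 2 * σ < n) :
    ∃ C : ℝ, 0 < C ∧ ∀ (lam : ℝ) (ξ z : EuclideanSpace ℝ (Fin n)),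
      0 < lam → lam < ‖ξ‖ → ‖ξ‖ ≤ 10 * lam → lam < ‖z‖ →
      (‖ξ‖ - lam) / 3 ≤ ‖ξ - z‖ →
      C * ((‖ξ‖ - lam) * (‖z‖ ^ 2 - lam ^ 2)) / (lam * ‖ξ - z‖ ^ ((n : ℝ) - 2 * σ + 2))
        ≤ ‖ξ - z‖ ^ (2 * σ - (n : ℝ))
          - (lam / ‖ξ‖) ^ ((n : ℝ) - 2 * σ) * ‖(lam ^ 2 / ‖ξ‖ ^ 2) • ξ - z‖ ^ (2 * σ - (n : ℝ)) :=
  stmt_7_general n σ hn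
end

section
/- Let 0 < σ < n/2, e ∈ ℝ^n nonzero, R > 0 with R|e| > 10, and set U(y) = (1 + |y − Re|²)^{−(n−2σ)/2} and λ₀ = R|e| − 2. Then there exists C = C(n, σ, R|e|) > 0 such that U(y) − U^{λ₀}(y) ≥ C·(|y|² − λ₀²)·|y|^{−(n−2σ+2)} for all |y| ≥ λ₀, where U^{λ}(y) = (λ/|y|)^{n−2σ}·U(λ²y/|y|²). -/
open Real

/-! With `A = 1 + ‖y - a‖²` and `B = (‖y‖² / λ²) (1 + ‖λ² y / ‖y‖² - a‖²)`, the Kelvin transform of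
the bubble `A ^ (-m/2)` is `B ^ (-m/2)`, and `B - A = (‖y‖² - λ²)(‖a‖² - λ² + 1) / λ²` is
nonnegative outside the ball of radius `λ`. The mean value theorem for `t ↦ t ^ (-m/2)` gives
`A ^ (-m/2) - B ^ (-m/2) ≥ (m/2) B ^ (-m/2 - 1) (B - A)`, and `B ≤ ((λ + ‖a‖)² + 1) ‖y‖² / λ²`
turns `B ^ (-m/2 - 1)` into a multiple of `‖y‖ ^ (-(m + 2))`. -/

noncomputable def bubble {E : Type*} [NormedAddCommGroup E] (a : E) (m : ℝ) (y : E) : ℝ :=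
  (1 + ‖y - a‖ ^ 2) ^ (-(m / 2))

noncomputable def kelvinTransform {E : Type*} [NormedAddCommGroup E] [NormedSpace ℝ E]
    (lam m : ℝ) (U : E → ℝ) (y : E) : ℝ :=
  (lam / ‖y‖) ^ m * U ((lam ^ 2 / ‖y‖ ^ 2) • y)

lemma mul_rpow_neg_mul_sub_le_rpow_neg_sub {q A B : ℝ} (hq : 0 < q) (hA : 0 < A) (hAB : A ≤ B) :
    q * B ^ (-(q + 1)) * (B - A) ≤ A ^ (-q) - B ^ (-q) := by
  rcases hAB.eq_or_lt with rfl | hAB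
  · simp
  obtain ⟨c, ⟨hAc, hcB⟩, hc⟩ := exists_hasDerivAt_eq_slope (fun x ↦ x ^ (-q))
    (fun x ↦ -q * x ^ (-q - 1)) hAB
    (continuousOn_id.rpow_const fun x hx ↦ Or.inl (hA.trans_le hx.1).ne')
    (fun x hx ↦ hasDerivAt_rpow_const (Or.inl (hA.trans hx.1).ne'))
  rw [eq_div_iff (sub_pos.2 hAB).ne'] at hc
  have hslope : A ^ (-q) - B ^ (-q) = q * c ^ (-(q + 1)) * (B - A) := by
    rw [show -(q + 1) = -q - 1 by ring]
    linear_combination hc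
  rw [hslope]
  have hcB' : B ^ (-(q + 1)) ≤ c ^ (-(q + 1)) :=
    rpow_le_rpow_of_nonpos (hA.trans hAc) hcB.le (by linarith)
  exact mul_le_mul_of_nonneg_right (mul_le_mul_of_nonneg_left hcB' hq.le) (sub_nonneg.2 hAB.le)

lemma sq_rpow_div_two {x : ℝ} (hx : 0 ≤ x) (p : ℝ) : (x ^ 2) ^ (p / 2) = x ^ p := by
  rw [rpow_div_two_eq_sqrt _ (sq_nonneg x), sqrt_sq hx]

section InnerProductSpace

variable {E : Type*} [NormedAddCommGroup E] [InnerProductSpace ℝ E]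

lemma kelvin_identity (a : E) {lam : ℝ} (hlam : lam ≠ 0) {y : E} (hy : y ≠ 0) :
    ‖y‖ ^ 2 / lam ^ 2 * (1 + ‖(lam ^ 2 / ‖y‖ ^ 2) • y - a‖ ^ 2) - (1 + ‖y - a‖ ^ 2)
      = (‖y‖ ^ 2 - lam ^ 2) * (‖a‖ ^ 2 - lam ^ 2 + 1) / lam ^ 2 := by
  have hy' : ‖y‖ ≠ 0 := norm_ne_zero_iff.2 hy
  rw [norm_sub_sq_real, norm_sub_sq_real, norm_smul, real_inner_smul_left, norm_div, norm_pow,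
    norm_pow, Real.norm_eq_abs, Real.norm_eq_abs, abs_norm, sq_abs]
  field_simp
  ring

lemma kelvinTransform_bubble (a : E) (m : ℝ) {lam : ℝ} (hlam : 0 < lam) {y : E} (hy : y ≠ 0) :
    kelvinTransform lam m (bubble a m) y
      = (‖y‖ ^ 2 / lam ^ 2 * (1 + ‖(lam ^ 2 / ‖y‖ ^ 2) • y - a‖ ^ 2)) ^ (-(m / 2)) := by
  have hy' : 0 < ‖y‖ := norm_pos_iff.2 hy
  rw [kelvinTransform, bubble, mul_rpow (by positivity) (by positivity), ← div_pow ‖y‖ lam 2,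
    show -(m / 2) = -m / 2 by ring, sq_rpow_div_two (by positivity), rpow_neg (by positivity),
    ← inv_rpow (by positivity), inv_div]

lemma norm_kelvin_point_sub_le (a : E) {lam : ℝ} (hlam : 0 < lam) {y : E} (hy : lam ≤ ‖y‖) :
    ‖(lam ^ 2 / ‖y‖ ^ 2) • y - a‖ ≤ lam + ‖a‖ := by
  have hy' : 0 < ‖y‖ := hlam.trans_le hy
  have hz : ‖(lam ^ 2 / ‖y‖ ^ 2) • y‖ ≤ lam := by
    rw [norm_smul, norm_div, norm_pow, norm_pow, Real.norm_eq_abs, Real.norm_eq_abs, abs_norm,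
      sq_abs, div_mul_eq_mul_div, div_le_iff₀ (by positivity)]
    nlinarith [mul_le_mul_of_nonneg_left hy (mul_pos hlam hy').le]
  exact (norm_sub_le _ _).trans (by linarith)

theorem exists_bubble_sub_kelvinTransform_ge (a : E) {m lam : ℝ} (hm : 0 < m) (hlam : 0 < lam)
    (ha : lam ^ 2 < ‖a‖ ^ 2 + 1) :
    ∃ C : ℝ, 0 < C ∧ ∀ y : E, lam ≤ ‖y‖ →
      C * (‖y‖ ^ 2 - lam ^ 2) * ‖y‖ ^ (-(m + 2))
        ≤ bubble a m y - kelvinTransform lam m (bubble a m) y := by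
  set K := 1 + (lam + ‖a‖) ^ 2 with hK
  set c₀ := ‖a‖ ^ 2 - lam ^ 2 + 1
  have hc₀ : 0 < c₀ := by linarith
  refine ⟨m / 2 * (c₀ / lam ^ 2) * (K / lam ^ 2) ^ (-(m / 2 + 1)), by positivity, fun y hy ↦ ?_⟩
  have hy' : 0 < ‖y‖ := hlam.trans_le hy
  set A := 1 + ‖y - a‖ ^ 2
  set B := ‖y‖ ^ 2 / lam ^ 2 * (1 + ‖(lam ^ 2 / ‖y‖ ^ 2) • y - a‖ ^ 2)
  have hA : 0 < A := by positivity
  have hBA : B - A = (‖y‖ ^ 2 - lam ^ 2) * c₀ / lam ^ 2 :=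
    kelvin_identity a hlam.ne' (norm_pos_iff.1 hy')
  have hAB : A ≤ B := by
    have : lam ^ 2 ≤ ‖y‖ ^ 2 := by gcongr
    rw [← sub_nonneg, hBA]
    exact div_nonneg (mul_nonneg (sub_nonneg.2 this) hc₀.le) (by positivity)
  have hBK : B ≤ K / lam ^ 2 * ‖y‖ ^ 2 := by
    have hz := norm_kelvin_point_sub_le a hlam hy
    have hD : 1 + ‖(lam ^ 2 / ‖y‖ ^ 2) • y - a‖ ^ 2 ≤ K := by rw [hK]; gcongr
    exact (mul_le_mul_of_nonneg_left hD (by positivity)).trans_eq (by ring)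
  have hBpow : (K / lam ^ 2) ^ (-(m / 2 + 1)) * ‖y‖ ^ (-(m + 2)) ≤ B ^ (-(m / 2 + 1)) := by
    rw [← sq_rpow_div_two hy'.le, show -(m + 2) / 2 = -(m / 2 + 1) by ring,
      ← mul_rpow (by positivity) (by positivity)]
    exact rpow_le_rpow_of_nonpos (hA.trans_le hAB) hBK (by linarith)
  rw [kelvinTransform_bubble a m hlam (norm_pos_iff.1 hy'), bubble]
  calc m / 2 * (c₀ / lam ^ 2) * (K / lam ^ 2) ^ (-(m / 2 + 1)) * (‖y‖ ^ 2 - lam ^ 2)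
        * ‖y‖ ^ (-(m + 2))
      = m / 2 * ((K / lam ^ 2) ^ (-(m / 2 + 1)) * ‖y‖ ^ (-(m + 2))) * (B - A) := by
        rw [hBA]; ring
    _ ≤ m / 2 * B ^ (-(m / 2 + 1)) * (B - A) := by gcongr
    _ ≤ A ^ (-(m / 2)) - B ^ (-(m / 2)) :=
        mul_rpow_neg_mul_sub_le_rpow_neg_sub (half_pos hm) hA hAB

end InnerProductSpace

theorem stmt_9_general (n : ℕ) (σ : ℝ) (hn : 2 * σ < n)
    (e : EuclideanSpace ℝ (Fin n)) (R : ℝ) (hR : 0 < R) (hRe : 10 < R * ‖e‖)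
    (U : EuclideanSpace ℝ (Fin n) → ℝ)
    (hU : ∀ y, U y = (1 + ‖y - R • e‖ ^ 2) ^ (-(((n : ℝ) - 2 * σ) / 2)))
    (lam₀ : ℝ) (hlam₀ : lam₀ = R * ‖e‖ - 2) :
    ∃ C : ℝ, 0 < C ∧ ∀ y : EuclideanSpace ℝ (Fin n), lam₀ ≤ ‖y‖ →
      C * (‖y‖ ^ 2 - lam₀ ^ 2) * ‖y‖ ^ (-((n : ℝ) - 2 * σ + 2))
        ≤ U y - (lam₀ / ‖y‖) ^ ((n : ℝ) - 2 * σ) * U ((lam₀ ^ 2 / ‖y‖ ^ 2) • y) := by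
  have hU' : U = bubble (R • e) ((n : ℝ) - 2 * σ) := funext hU
  have hRe' : ‖R • e‖ = R * ‖e‖ := by rw [norm_smul, norm_of_nonneg hR.le]
  subst hU' hlam₀
  exact exists_bubble_sub_kelvinTransform_ge (R • e) (by linarith) (by linarith)
    (by rw [hRe']; nlinarith)

theorem stmt_9 (n : ℕ) (σ : ℝ) (hσ : 0 < σ) (hn : 2 * σ < n)
    (e : EuclideanSpace ℝ (Fin n)) (he : e ≠ 0) (R : ℝ) (hR : 0 < R) (hRe : 10 < R * ‖e‖)
    (U : EuclideanSpace ℝ (Fin n) → ℝ)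
    (hU : ∀ y, U y = (1 + ‖y - R • e‖ ^ 2) ^ (-(((n : ℝ) - 2 * σ) / 2)))
    (lam₀ : ℝ) (hlam₀ : lam₀ = R * ‖e‖ - 2) :
    ∃ C : ℝ, 0 < C ∧ ∀ y : EuclideanSpace ℝ (Fin n), lam₀ ≤ ‖y‖ →
      C * (‖y‖ ^ 2 - lam₀ ^ 2) * ‖y‖ ^ (-((n : ℝ) - 2 * σ + 2))
        ≤ U y - (lam₀ / ‖y‖) ^ ((n : ℝ) - 2 * σ) * U ((lam₀ ^ 2 / ‖y‖ ^ 2) • y) :=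
  stmt_9_general n σ hn e R hR hRe U hU lam₀ hlam₀
end

section
/- Let 0 < σ < n/2, λ > 0, x ∈ ℝ^n, and let u, K : ℝ^n → ℝ be nonnegative measurable functions. Then, with ξ^{x,λ} = x + λ²(ξ−x)/|ξ−x|² and u^{x,λ}(ξ) = (λ/|ξ−x|)^{n−2σ} u(ξ^{x,λ}), the change of variables identity holds: (λ/|ξ−x|)^{n−2σ} ∫_{|z−x|≥λ} K(z) u(z)^{(n+2σ)/(n−2σ)} / |ξ^{x,λ} − z|^{n−2σ} dz = ∫_{|z−x|≤λ} K(z^{x,λ}) u^{x,λ}(z)^{(n+2σ)/(n−2σ)} / |ξ − z|^{n−2σ} dz, for every ξ ≠ x. -/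
/-!
Substitute `z ↦ z^{x,λ}`: the inversion maps the punctured ball `0 < |z - x| ≤ λ` onto the
exterior `|z - x| ≥ λ` with Jacobian `(λ/|z-x|)^{2n}`, and
`|ξ^{x,λ} - z^{x,λ}| = λ² |ξ - z| / (|ξ - x| |z - x|)`. After the substitution the powers of
`λ/|ξ-x|` cancel and those of `λ/|z-x|` add up to `2n - (n - 2σ) = n + 2σ`, which is exactly the
weight `(λ/|z-x|)^{(n-2σ)(n+2σ)/(n-2σ)}` carried by the Kelvin transform.
-/

open MeasureTheory EuclideanGeometry Set Metric Module
open scoped ENNReal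

section Inversion

variable {E : Type*} [NormedAddCommGroup E] [InnerProductSpace ℝ E]

theorem inversion_eq_add_smul (x : E) (lam : ℝ) (z : E) :
    inversion x lam z = x + (lam ^ 2 / ‖z - x‖ ^ 2) • (z - x) := by
  simp only [inversion_def, vsub_eq_sub, vadd_eq_add, dist_eq_norm, div_pow, add_comm]

theorem image_inversion_closedBall_diff_center {x : E} {lam : ℝ} (hlam : 0 < lam) :
    inversion x lam '' (closedBall x lam \ {x}) = (ball x lam)ᶜ := by
  ext w
  rw [(inversion_involutive x hlam.ne').image_eq_preimage_symm]
  simp only [mem_preimage, mem_sdiff, mem_closedBall, dist_inversion_center, mem_singleton_iff,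
    inversion_eq_center hlam.ne', mem_compl_iff, mem_ball, not_lt]
  rcases eq_or_ne w x with rfl | hw
  · simp [hlam]
  · have hd : 0 < dist w x := dist_pos.2 hw
    rw [div_le_iff₀ hd]
    constructor
    · rintro ⟨h, -⟩; nlinarith
    · intro h; exact ⟨by nlinarith, hw⟩

variable [FiniteDimensional ℝ E]

theorem abs_det_fderiv_inversion (x z : E) (lam : ℝ) :
    |((lam / dist z x) ^ 2 • ((ℝ ∙ (z - x))ᗮ.reflection : E →L[ℝ] E)).det| =
      (lam / dist z x) ^ (2 * finrank ℝ E) := by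
  have hK : ((ℝ ∙ (z - x))ᗮ.reflection : E →L[ℝ] E).det = (-1) ^ finrank ℝ (ℝ ∙ (z - x))ᗮᗮ :=
    Submodule.det_reflection _
  rw [ContinuousLinearMap.det, ContinuousLinearMap.toLinearMap_smul, LinearMap.det_smul,
    ← ContinuousLinearMap.det, hK, abs_mul, abs_pow (-1 : ℝ), abs_neg, abs_one, one_pow, mul_one,
    abs_pow, abs_sq, pow_mul]

variable [MeasurableSpace E] [BorelSpace E] [Nontrivial E] (μ : Measure E) [μ.IsAddHaarMeasure]

theorem lintegral_compl_ball_eq_lintegral_closedBall_inversion {x : E} {lam : ℝ} (hlam : 0 < lam)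
    (g : E → ℝ≥0∞) :
    ∫⁻ z in (ball x lam)ᶜ, g z ∂μ =
      ∫⁻ z in closedBall x lam,
        ENNReal.ofReal ((lam / dist z x) ^ (2 * finrank ℝ E)) * g (inversion x lam z) ∂μ := by
  rw [← image_inversion_closedBall_diff_center hlam,
    lintegral_image_eq_lintegral_abs_det_fderiv_mul μ
      (measurableSet_closedBall.diff (measurableSet_singleton x))
      (fun z hz => (hasFDerivAt_inversion hz.2).hasFDerivWithinAt)
      (inversion_injective x hlam.ne').injOn g]
  simp_rw [abs_det_fderiv_inversion]
  exact setLIntegral_congr (sdiff_null_ae_eq_self (measure_singleton x))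

end Inversion

theorem rpow_kelvin_weight_identity {a c b A U e p : ℝ} {N : ℕ} (ha : 0 < a) (hc : 0 < c)
    (hb : 0 ≤ b) (hU : 0 ≤ U) (hN : e + e * p = N) :
    c ^ e * (a ^ N * (A * U ^ p / (c * a * b) ^ e)) = A * (a ^ e * U) ^ p / b ^ e := by
  rw [← Real.rpow_natCast, ← hN, Real.rpow_add ha, Real.mul_rpow (by positivity) hb,
    Real.mul_rpow hc.le ha.le, Real.mul_rpow (by positivity) hU, ← Real.rpow_mul ha.le]
  have hce : c ^ e ≠ 0 := (Real.rpow_pos_of_pos hc e).ne'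
  have hae : a ^ e ≠ 0 := (Real.rpow_pos_of_pos ha e).ne'
  field_simp

theorem stmt_10_general (n : ℕ) (hn : 1 ≤ n) (σ lam : ℝ) (hσn : 2 * σ < n)
    (hlam : 0 < lam) (x : EuclideanSpace ℝ (Fin n))
    (u K : EuclideanSpace ℝ (Fin n) → ℝ) (hu0 : ∀ z, 0 ≤ u z)
    (ξ : EuclideanSpace ℝ (Fin n)) (hξ : ξ ≠ x) :
    ENNReal.ofReal ((lam / ‖ξ - x‖) ^ ((n : ℝ) - 2 * σ)) *
      ∫⁻ z in {z : EuclideanSpace ℝ (Fin n) | lam ≤ ‖z - x‖},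
        ENNReal.ofReal (K z * u z ^ (((n : ℝ) + 2 * σ) / ((n : ℝ) - 2 * σ)) /
          ‖(x + (lam ^ 2 / ‖ξ - x‖ ^ 2) • (ξ - x)) - z‖ ^ ((n : ℝ) - 2 * σ))
    = ∫⁻ z in {z : EuclideanSpace ℝ (Fin n) | ‖z - x‖ ≤ lam},
        ENNReal.ofReal (K (x + (lam ^ 2 / ‖z - x‖ ^ 2) • (z - x)) *
          ((lam / ‖z - x‖) ^ ((n : ℝ) - 2 * σ) *
            u (x + (lam ^ 2 / ‖z - x‖ ^ 2) • (z - x))) ^ (((n : ℝ) + 2 * σ) / ((n : ℝ) - 2 * σ)) /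
          ‖ξ - z‖ ^ ((n : ℝ) - 2 * σ)) := by
  have : Nonempty (Fin n) := ⟨⟨0, hn⟩⟩
  have he : (n : ℝ) - 2 * σ ≠ 0 := by linarith
  have hexterior : {z | lam ≤ ‖z - x‖} = (ball x lam)ᶜ := by ext; simp [dist_eq_norm]
  have hball : {z | ‖z - x‖ ≤ lam} = closedBall x lam := by ext; simp [dist_eq_norm]
  simp_rw [← inversion_eq_add_smul, hexterior, hball]
  rw [lintegral_compl_ball_eq_lintegral_closedBall_inversion volume hlam,
    ← lintegral_const_mul' _ _ ENNReal.ofReal_ne_top]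
  refine lintegral_congr_ae ((ae_restrict_of_ae (volume.ae_ne x)).mono fun z hz => ?_)
  dsimp only
  rw [← ENNReal.ofReal_mul (by positivity), ← ENNReal.ofReal_mul (by positivity),
    finrank_euclideanSpace_fin]
  simp only [← dist_eq_norm]
  rw [dist_inversion_inversion hξ hz, sq, ← div_mul_div_comm]
  refine congrArg ENNReal.ofReal (rpow_kelvin_weight_identity ?_ ?_ dist_nonneg (hu0 _) ?_)
  · exact div_pos hlam (dist_pos.2 hz)
  · exact div_pos hlam (dist_pos.2 hξ)
  · rw [mul_div_cancel₀ _ he]; push_cast; ring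

theorem stmt_10 (n : ℕ) (hn : 1 ≤ n) (σ lam : ℝ) (hσ : 0 < σ) (hσn : 2 * σ < n)
    (hlam : 0 < lam) (x : EuclideanSpace ℝ (Fin n))
    (u K : EuclideanSpace ℝ (Fin n) → ℝ) (hu : Measurable u) (hK : Measurable K)
    (hu0 : ∀ z, 0 ≤ u z) (hK0 : ∀ z, 0 ≤ K z)
    (ξ : EuclideanSpace ℝ (Fin n)) (hξ : ξ ≠ x) :
    ENNReal.ofReal ((lam / ‖ξ - x‖) ^ ((n : ℝ) - 2 * σ)) *
      ∫⁻ z in {z : EuclideanSpace ℝ (Fin n) | lam ≤ ‖z - x‖},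
        ENNReal.ofReal (K z * u z ^ (((n : ℝ) + 2 * σ) / ((n : ℝ) - 2 * σ)) /
          ‖(x + (lam ^ 2 / ‖ξ - x‖ ^ 2) • (ξ - x)) - z‖ ^ ((n : ℝ) - 2 * σ))
    = ∫⁻ z in {z : EuclideanSpace ℝ (Fin n) | ‖z - x‖ ≤ lam},
        ENNReal.ofReal (K (x + (lam ^ 2 / ‖z - x‖ ^ 2) • (z - x)) *
          ((lam / ‖z - x‖) ^ ((n : ℝ) - 2 * σ) *
            u (x + (lam ^ 2 / ‖z - x‖ ^ 2) • (z - x))) ^ (((n : ℝ) + 2 * σ) / ((n : ℝ) - 2 * σ)) /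
          ‖ξ - z‖ ^ ((n : ℝ) - 2 * σ)) :=
  stmt_10_general n hn σ lam hσn hlam x u K hu0 ξ hξ
end

section
/- Let n > 2σ > 0 and suppose v : ℝ^n → ℝ is nonnegative, measurable, v(0) = 1, and satisfies v(y) = ∫_{ℝ^n} K₀ · v(z)^{(n+2σ)/(n−2σ)} |y−z|^{2σ−n} dz + C₀ for all y ∈ ℝ^n, where K₀ > 0 and C₀ ≥ 0 are constants. Then C₀ = 0. -/
/-!
If `C₀ > 0`, the equation forces `v ≥ C₀` everywhere, so the integrand at `y = 0` dominates
`K₀ C₀ ^ p ‖z‖ ^ (2σ - n)`. But no power of the norm is integrable on `ℝⁿ`: in polar coordinates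
it becomes `r ^ (s + n - 1)` on `(0, ∞)`, which diverges at `0` or at `∞`.
-/

open MeasureTheory Set

theorem not_integrable_norm_rpow {E : Type*} [NormedAddCommGroup E] [NormedSpace ℝ E]
    [FiniteDimensional ℝ E] [MeasurableSpace E] [BorelSpace E] [Nontrivial E]
    (μ : Measure E) [μ.IsAddHaarMeasure] (s : ℝ) :
    ¬ Integrable (fun x : E => ‖x‖ ^ s) μ := by
  rw [integrable_fun_norm_addHaar μ (f := fun r => r ^ s)]
  intro h
  refine not_integrableOn_Ioi_rpow (s + (Module.finrank ℝ E - 1 : ℕ))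
    (h.congr_fun ?_ measurableSet_Ioi)
  intro r (hr : 0 < r)
  dsimp only
  rw [smul_eq_mul, Real.rpow_add hr, Real.rpow_natCast, mul_comm]

theorem stmt_15_general (n : ℕ) (σ : ℝ) (hσ : 0 < σ) (hn : 2 * σ < n)
    (v : EuclideanSpace ℝ (Fin n) → ℝ) (hv0 : ∀ y, 0 ≤ v y)
    (K₀ C₀ : ℝ) (hK₀ : 0 < K₀) (hC₀ : 0 ≤ C₀)
    (hint : ∀ y, Integrable (fun z => K₀ * v z ^ (((n : ℝ) + 2 * σ) / ((n : ℝ) - 2 * σ)) *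
      ‖y - z‖ ^ (2 * σ - (n : ℝ))))
    (heq : ∀ y, v y = (∫ z, K₀ * v z ^ (((n : ℝ) + 2 * σ) / ((n : ℝ) - 2 * σ)) *
      ‖y - z‖ ^ (2 * σ - (n : ℝ))) + C₀) :
    C₀ = 0 := by
  set p : ℝ := ((n : ℝ) + 2 * σ) / ((n : ℝ) - 2 * σ)
  by_contra hC
  have hC₀_pos : 0 < C₀ := hC₀.lt_of_ne' hC
  have hp : 0 ≤ p := div_nonneg (by linarith) (by linarith)
  have hv_ge : ∀ y, C₀ ≤ v y := fun y => by
    have : 0 ≤ ∫ z, K₀ * v z ^ p * ‖y - z‖ ^ (2 * σ - (n : ℝ)) :=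
      integral_nonneg fun z => by have := hv0 z; positivity
    linarith [heq y]
  have : Nontrivial (EuclideanSpace ℝ (Fin n)) := by
    have : Nonempty (Fin n) := ⟨⟨0, by exact_mod_cast (by linarith : (0 : ℝ) < n)⟩⟩
    infer_instance
  apply not_integrable_norm_rpow (volume : Measure (EuclideanSpace ℝ (Fin n))) (2 * σ - n)
  have hc : IsUnit (K₀ * C₀ ^ p) := (by positivity : K₀ * C₀ ^ p ≠ 0).isUnit
  refine (integrable_const_mul_iff hc _).1 <|
    (hint 0).mono' (by fun_prop : Measurable _).aestronglyMeasurable <| .of_forall fun z => ?_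
  rw [zero_sub, norm_neg, Real.norm_of_nonneg (by positivity)]
  gcongr
  exact hv_ge z

theorem stmt_15 (n : ℕ) (σ : ℝ) (hσ : 0 < σ) (hn : 2 * σ < n)
    (v : EuclideanSpace ℝ (Fin n) → ℝ) (hvm : Measurable v) (hv0 : ∀ y, 0 ≤ v y)
    (hv1 : v 0 = 1) (K₀ C₀ : ℝ) (hK₀ : 0 < K₀) (hC₀ : 0 ≤ C₀)
    (hint : ∀ y, Integrable (fun z => K₀ * v z ^ (((n : ℝ) + 2 * σ) / ((n : ℝ) - 2 * σ)) *
      ‖y - z‖ ^ (2 * σ - (n : ℝ))))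
    (heq : ∀ y, v y = (∫ z, K₀ * v z ^ (((n : ℝ) + 2 * σ) / ((n : ℝ) - 2 * σ)) *
      ‖y - z‖ ^ (2 * σ - (n : ℝ))) + C₀) :
    C₀ = 0 :=
  stmt_15_general n σ hσ hn v hv0 K₀ C₀ hK₀ hC₀ hint heq
end
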